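/- Expansion in higher-order Bernoulli polynomials: D_n(x|a_1,…,a_r) = ∑_{m=0}^n ( ∑_{i=0}^{n-m} ∑_{l=0}^{n-m-i} C(n,i) C(n-i,l) 𝔠_i^{(s)} S_1(n-i-l,m) D_l(a_1,…,a_r) ) 𝔅_m^{(s)}(x), for any integer s ≥ 0. -/

import Mathlib

open Finset PowerSeries

/-- Exponential generating function: `∑ f n * t^n / n!`. -/
noncomputable def egf (f : ℕ → ℚ) : PowerSeries ℚ :=
  PowerSeries.mk fun n => f n / n.factorial

/-- The formal power series `log(1+t) = ∑_{m≥1} (-1)^{m-1} t^m / m`. -/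
noncomputable def log1p : PowerSeries ℚ :=
  PowerSeries.mk fun n => if n = 0 then 0 else (-1) ^ (n - 1) / n

/-- Formal exponential composition: for `f` with zero constant term this is
`exp(f) = ∑_k f^k / k!` (the sum in each coefficient is finite). -/
noncomputable def expPS (f : PowerSeries ℚ) : PowerSeries ℚ :=
  PowerSeries.mk fun n =>
    ∑ k ∈ Finset.range (n + 1), (PowerSeries.coeff n (f ^ k)) / k.factorial

/-- `(1+t)^a := exp(a · log(1+t))` as a formal power series. -/
noncomputable def onePow (a : ℚ) : PowerSeries ℚ := expPS (PowerSeries.C a * log1p)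

/-- `e^{a t} = ∑ a^n t^n / n!`. -/
noncomputable def expAt (a : ℚ) : PowerSeries ℚ :=
  PowerSeries.mk fun n => a ^ n / n.factorial

/-- Falling factorial `(x)_n = x(x-1)⋯(x-n+1)`. -/
noncomputable def ffall (x : ℚ) (n : ℕ) : ℚ := ∏ i ∈ Finset.range n, (x - i)

/-!
Dividing the generating identity at `x` by the one at `0` gives
`∑ D_n(x) tⁿ/n! = (∑ D_l tˡ/l!) · (1+t)^x`. Substituting `t ↦ log(1+t)` into the Bernoulli
identity turns `e^t - 1` into `t` and `e^{xt}` into `(1+t)^x`, so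
`(1+t)^x = (t / log(1+t))^s · ∑ 𝔅_m^{(s)}(x) log(1+t)^m / m!`, and
`log(1+t)^m / m! = ∑_k S_1(k,m) t^k / k!`. Multiplying out the three exponential generating
functions gives the coefficient identity.

The Stirling expansion of `log(1+t)^m` comes from comparing, as polynomials in `x`, the two
expansions `(1+t)^x = ∑ x^m log(1+t)^m / m! = ∑ (x)_k t^k / k!`; the second holds because
`(1+t)^x` solves `(1+t) F' = x F`, which forces `(k+1) F_{k+1} = (x-k) F_k`.
-/

namespace PowerSeries

variable {R : Type*} [CommRing R]

lemma coeff_pow_eq_zero_of_lt {g : R⟦X⟧} (hg : constantCoeff g = 0) {n k : ℕ} (h : n < k) :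
    coeff n (g ^ k) = 0 :=
  X_pow_dvd_iff.1 (pow_dvd_pow_of_dvd (X_dvd_iff.2 hg) k) n h

lemma coeff_subst_eq_sum {g : R⟦X⟧} (hg : constantCoeff g = 0) (f : R⟦X⟧) (n : ℕ) :
    coeff n (f.subst g) = ∑ k ∈ range (n + 1), coeff k f * coeff n (g ^ k) := by
  rw [coeff_subst' (HasSubst.of_constantCoeff_zero' hg),
    finsum_eq_sum_of_support_subset (s := range (n + 1))]
  · simp only [smul_eq_mul]
  · intro k hk
    by_contra! h
    simp only [coe_range, Set.mem_Iio, not_lt] at h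
    exact hk (by simp only [coeff_pow_eq_zero_of_lt hg h, smul_zero])

lemma coeff_succ_of_one_add_X_mul_derivative {F : R⟦X⟧} {c : R}
    (hF : (1 + X) * d⁄dX R F = C c * F) (n : ℕ) :
    (n + 1) * coeff (n + 1) F = (c - n) * coeff n F := by
  have h := congrArg (coeff n) hF
  rw [add_mul, one_mul, map_add, coeff_derivative, coeff_C_mul] at h
  rcases n with _ | n
  · simpa using h
  · rw [coeff_succ_X_mul, coeff_derivative] at h
    push_cast at h ⊢
    linear_combination h

lemma one_add_X_mul_derivative_log {A : Type*} [CommRing A] [Algebra ℚ A] :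
    (1 + X) * d⁄dX A (log A) = 1 := by
  ext n
  rcases n with _ | n
  · simp [deriv_log]
  · rw [add_mul, one_mul, map_add, coeff_succ_X_mul, deriv_log, coeff_mk, coeff_mk, coeff_one]
    simp [pow_succ]

end PowerSeries

lemma log1p_eq_log : log1p = log ℚ := by
  ext n
  rcases n with _ | n
  · simp [log1p]
  · simp [log1p, pow_succ]

lemma constantCoeff_log1p : constantCoeff log1p = 0 := by
  rw [log1p_eq_log, constantCoeff_log]

lemma derivative_expAt (c : ℚ) : d⁄dX ℚ (expAt c) = C c * expAt c := by
  ext n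
  rw [coeff_derivative, coeff_C_mul, expAt, coeff_mk, coeff_mk, Nat.factorial_succ]
  push_cast
  field_simp
  ring

lemma onePow_eq_subst (c : ℚ) : onePow c = (expAt c).subst log1p := by
  ext n
  rw [coeff_subst_eq_sum constantCoeff_log1p, onePow, expPS, coeff_mk]
  refine sum_congr rfl fun k _ => ?_
  rw [mul_pow, ← map_pow, coeff_C_mul, expAt, coeff_mk]
  ring

lemma one_add_X_mul_derivative_onePow (c : ℚ) :
    (1 + X) * d⁄dX ℚ (onePow c) = C c * onePow c := by
  have hL : HasSubst log1p := HasSubst.of_constantCoeff_zero' constantCoeff_log1p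
  rw [onePow_eq_subst, derivative_subst hL, derivative_expAt, ← smul_eq_C_mul, subst_smul hL,
    mul_left_comm, log1p_eq_log, one_add_X_mul_derivative_log, mul_one, smul_eq_C_mul]

lemma coeff_onePow (c : ℚ) (n : ℕ) : coeff n (onePow c) = ffall c n / n.factorial := by
  induction n with
  | zero => simp [onePow, expPS, ffall]
  | succ n ih =>
    have h := coeff_succ_of_one_add_X_mul_derivative (one_add_X_mul_derivative_onePow c) n
    rw [ih] at h
    field_simp at h
    rw [ffall, prod_range_succ, ← ffall, Nat.factorial_succ, Nat.cast_mul,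
      eq_div_iff (by positivity)]
    push_cast
    linear_combination h

lemma onePow_zero : onePow 0 = 1 := by
  ext n
  rw [coeff_onePow, coeff_one]
  rcases n with _ | n
  · simp [ffall]
  · simp [ffall, prod_range_succ']

lemma onePow_one : onePow 1 = 1 + X := by
  ext n
  rw [coeff_onePow, map_add, coeff_one, coeff_X]
  rcases n with _ | _ | n
  · simp [ffall]
  · simp [ffall]
  · simp [ffall, prod_range_succ']

lemma coeff_one_onePow (c : ℚ) : coeff 1 (onePow c) = c := by
  simp [coeff_onePow, ffall]

lemma eq_of_forall_sum_mul_pow_eq {K : Type*} [Field K] [Infinite K] {N : ℕ} {b c : ℕ → K}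
    (h : ∀ x : K, ∑ k ∈ range N, b k * x ^ k = ∑ k ∈ range N, c k * x ^ k) {k : ℕ}
    (hk : k < N) : b k = c k := by
  have hpoly : ∑ k ∈ range N, Polynomial.C (b k) * Polynomial.X ^ k
      = ∑ k ∈ range N, Polynomial.C (c k) * Polynomial.X ^ k :=
    Polynomial.funext fun x => by simpa [Polynomial.eval_finsetSum] using h x
  simpa [Polynomial.finsetSum_coeff, Polynomial.coeff_C_mul, Polynomial.coeff_X_pow, hk]
    using congrArg (Polynomial.coeff · k) hpoly

lemma coeff_onePow_eq_sum (c : ℚ) (n : ℕ) :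
    coeff n (onePow c) = ∑ k ∈ range (n + 1), coeff n (log1p ^ k) / k.factorial * c ^ k := by
  rw [onePow_eq_subst, coeff_subst_eq_sum constantCoeff_log1p]
  refine sum_congr rfl fun k _ => ?_
  rw [expAt, coeff_mk]
  ring

lemma coeff_log1p_pow {S1 : ℕ → ℕ → ℚ} {N : ℕ}
    (hS1 : ∀ x : ℚ, ffall x N = ∑ j ∈ range (N + 1), S1 N j * x ^ j) {m : ℕ} (hm : m ≤ N) :
    coeff N (log1p ^ m) = S1 N m * m.factorial / N.factorial := by
  have h := eq_of_forall_sum_mul_pow_eq (b := fun k => coeff N (log1p ^ k) / k.factorial)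
    (c := fun k => S1 N k / N.factorial) (fun x => by
      rw [← coeff_onePow_eq_sum, coeff_onePow, hS1, sum_div]
      exact sum_congr rfl fun k _ => by ring) (Nat.lt_succ_of_le hm)
  field_simp at h
  rw [eq_div_iff (by positivity)]
  linear_combination h

lemma egf_subst_log1p {S1 : ℕ → ℕ → ℚ}
    (hS1 : ∀ (l : ℕ) (x : ℚ), ffall x l = ∑ j ∈ range (l + 1), S1 l j * x ^ j) (f : ℕ → ℚ) :
    (egf f).subst log1p = egf fun k => ∑ m ∈ range (k + 1), S1 k m * f m := by
  ext k
  simp only [coeff_subst_eq_sum constantCoeff_log1p, egf, coeff_mk, sum_div]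
  refine sum_congr rfl fun m hm => ?_
  rw [coeff_log1p_pow (hS1 k) (Nat.lt_succ_iff.1 (mem_range.1 hm))]
  field_simp

lemma egf_mul (f g : ℕ → ℚ) :
    egf f * egf g = egf fun n => ∑ i ∈ range (n + 1), (n.choose i : ℚ) * f i * g (n - i) := by
  ext n
  rw [coeff_mul, Nat.sum_antidiagonal_eq_sum_range_succ_mk, egf, egf, egf, coeff_mk, sum_div]
  refine sum_congr rfl fun i hi => ?_
  have hin : i ≤ n := Nat.lt_succ_iff.1 (mem_range.1 hi)
  have hchoose : (n.choose i : ℚ) ≠ 0 := by exact_mod_cast (Nat.choose_pos hin).ne'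
  rw [coeff_mk, coeff_mk, ← Nat.choose_mul_factorial_mul_factorial hin]
  push_cast
  field_simp

lemma onePow_sub_one_ne_zero {c : ℚ} (hc : c ≠ 0) : onePow c - 1 ≠ 0 := fun h => by
  simpa [coeff_one_onePow, hc] using congrArg (coeff 1) h

lemma egf_eq_mul_onePow {ι : Type*} [Fintype ι] {a : ι → ℚ} (ha : ∀ j, a j ≠ 0) {k : ℕ}
    {D : ℕ → ℚ → ℚ}
    (hD : ∀ x : ℚ, (∏ j, (onePow (a j) - 1)) * egf (fun n => D n x) = log1p ^ k * onePow x)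
    (x : ℚ) : egf (fun n => D n x) = egf (fun n => D n 0) * onePow x := by
  have hP : ∏ j, (onePow (a j) - 1) ≠ 0 :=
    prod_ne_zero_iff.2 fun j _ => onePow_sub_one_ne_zero (ha j)
  refine mul_left_cancel₀ hP ?_
  rw [hD x, ← mul_assoc, hD 0, onePow_zero, mul_one]

lemma onePow_eq_egf_mul_subst {s : ℕ} {B : ℕ → ℚ} {x : ℚ}
    (hB : (expAt 1 - 1) ^ s * egf B = X ^ s * expAt x) {c : ℕ → ℚ}
    (hc : log1p ^ s * egf c = X ^ s) : onePow x = egf c * (egf B).subst log1p := by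
  have hL : HasSubst log1p := HasSubst.of_constantCoeff_zero' constantCoeff_log1p
  have hBL : X ^ s * (egf B).subst log1p = log1p ^ s * onePow x := by
    have h := congrArg (substAlgHom hL) hB
    simp only [map_mul, map_pow, map_sub, map_one, coe_substAlgHom, ← onePow_eq_subst,
      subst_X hL, onePow_one, add_sub_cancel_left] at h
    exact h
  refine mul_left_cancel₀ (pow_ne_zero s X_ne_zero) ?_
  calc X ^ s * onePow x = egf c * (log1p ^ s * onePow x) := by rw [← hc]; ring
    _ = X ^ s * (egf c * (egf B).subst log1p) := by rw [← hBL]; ring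

lemma sum_range_triangle_three {M : Type*} [AddCommMonoid M] (n : ℕ) (T : ℕ → ℕ → ℕ → M) :
    ∑ i ∈ range (n + 1), ∑ l ∈ range (n - i + 1), ∑ m ∈ range (n - i - l + 1), T i l m
      = ∑ m ∈ range (n + 1), ∑ i ∈ range (n - m + 1), ∑ l ∈ range (n - m - i + 1), T i l m :=
  calc _ = ∑ i ∈ range (n + 1), ∑ m ∈ range (n - i + 1), ∑ l ∈ range (n - m - i + 1), T i l m :=
        sum_congr rfl fun i _ => sum_comm' fun l m => by simp only [mem_range]; omega
    _ = _ := sum_comm' fun i m => by simp only [mem_range]; omega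

theorem stmt14 (r : ℕ) (a : Fin r → ℚ) (ha : ∀ j, a j ≠ 0) (s : ℕ) (D : ℕ → ℚ → ℚ)
    (hD : ∀ x : ℚ, (∏ j, (onePow (a j) - 1)) * egf (fun n => D n x) = log1p ^ r * onePow x)
    (S1 : ℕ → ℕ → ℚ) (hS1 : ∀ (l : ℕ) (x : ℚ), ffall x l = ∑ j ∈ Finset.range (l + 1), S1 l j * x ^ j)
    (Bs : ℕ → ℚ → ℚ)
    (hBs : ∀ x : ℚ, (expAt 1 - 1) ^ s * egf (fun n => Bs n x) =
      (PowerSeries.X : PowerSeries ℚ) ^ s * expAt x)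
    (cs : ℕ → ℚ)
    (hcs : log1p ^ s * egf cs = (PowerSeries.X : PowerSeries ℚ) ^ s)
    (n : ℕ) (x : ℚ) :
    D n x = ∑ m ∈ Finset.range (n + 1),
      (∑ i ∈ Finset.range (n - m + 1), ∑ l ∈ Finset.range (n - m - i + 1),
        (n.choose i : ℚ) * ((n - i).choose l : ℚ) * cs i * S1 (n - i - l) m * D l 0) *
        Bs m x := by
  have hegf : egf (fun k => D k x) = egf cs * (egf (fun l => D l 0) *
      egf fun k => ∑ m ∈ range (k + 1), S1 k m * Bs m x) := by
    rw [egf_eq_mul_onePow ha hD x, onePow_eq_egf_mul_subst (hBs x) hcs, egf_subst_log1p hS1]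
    ring
  rw [egf_mul, egf_mul] at hegf
  have hcoeff := congrArg (coeff n) hegf
  simp only [egf, coeff_mk] at hcoeff
  rw [div_left_inj' (by positivity)] at hcoeff
  simp only [hcoeff, mul_sum, sum_mul]
  rw [sum_range_triangle_three]
  exact sum_congr rfl fun m _ => sum_congr rfl fun i _ => sum_congr rfl fun l _ => by ring
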